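/- arXiv:1612.08888 — 3 statements merged into one kernel-verified Lean document; each statement's English description precedes it below -/
import Mathlib

section
/- Sufficient condition (suff): Let Γ be a bimatrix game such that for every x ∈ X, max_{j∈BR_II(x)} α(x,e_j) = min_{j} α(x,e_j). Then v_A = α^L = α^H. -/
open Matrix

noncomputable section

/-- The set of mixed strategies: the standard simplex in `ℝ^m`. -/
def Simp (m : ℕ) : Set (Fin m → ℝ) := stdSimplex ℝ (Fin m)

/-- Bilinear payoff `xᵀ A y`. -/
def pay {m n : ℕ} (A : Matrix (Fin m) (Fin n) ℝ) (x : Fin m → ℝ) (y : Fin n → ℝ) : ℝ :=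
  x ⬝ᵥ A.mulVec y

/-- Payoff of a mixed strategy `x` against the pure strategy `j`: `α(x, e_j) = (xᵀA)_j`. -/
def purePay {m n : ℕ} (A : Matrix (Fin m) (Fin n) ℝ) (x : Fin m → ℝ) (j : Fin n) : ℝ :=
  Matrix.vecMul x A j

/-- Pure best replies of player II against `x`. -/
def BRII {m n : ℕ} (B : Matrix (Fin m) (Fin n) ℝ) (x : Fin m → ℝ) : Set (Fin n) :=
  {j | ∀ k, purePay B x k ≤ purePay B x j}

/-- Best-reply region `X(j)` of column `j`. -/
def XReg {m n : ℕ} (B : Matrix (Fin m) (Fin n) ℝ) (j : Fin n) : Set (Fin m → ℝ) :=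
  {x ∈ Simp m | j ∈ BRII B x}

/-- `D`: columns whose best-reply region has a fully mixed point. -/
def Dset {m n : ℕ} (B : Matrix (Fin m) (Fin n) ℝ) : Set (Fin n) :=
  {j | ∃ x ∈ XReg B j, ∀ i, 0 < x i}

/-- `E(j)`: columns of `B` payoff-equivalent to column `j`. -/
def Ecols {m n : ℕ} (B : Matrix (Fin m) (Fin n) ℝ) (j : Fin n) : Set (Fin n) :=
  {k | ∀ i, B i k = B i j}

/-- `min_j α(x, e_j)`. -/
def minPure {m n : ℕ} (A : Matrix (Fin m) (Fin n) ℝ) (x : Fin m → ℝ) : ℝ :=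
  sInf {w | ∃ j, w = purePay A x j}

/-- `max_j α(x, e_j)`. -/
def maxPure {m n : ℕ} (A : Matrix (Fin m) (Fin n) ℝ) (x : Fin m → ℝ) : ℝ :=
  sSup {w | ∃ j, w = purePay A x j}

/-- `max_{j ∈ BR_II(x)} α(x, e_j)`. -/
def maxBR {m n : ℕ} (A B : Matrix (Fin m) (Fin n) ℝ) (x : Fin m → ℝ) : ℝ :=
  sSup {w | ∃ j ∈ BRII B x, w = purePay A x j}

/-- Matrix game value `v_A = max_{x ∈ X} min_j α(x, e_j)`. -/
def matVal {m n : ℕ} (A : Matrix (Fin m) (Fin n) ℝ) : ℝ :=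
  sSup {v | ∃ x ∈ Simp m, v = minPure A x}

/-- `min_{k ∈ E(j)} α(x, e_k)`. -/
def minE {m n : ℕ} (A B : Matrix (Fin m) (Fin n) ℝ) (j : Fin n) (x : Fin m → ℝ) : ℝ :=
  sInf {w | ∃ k ∈ Ecols B j, w = purePay A x k}

/-- Commitment value `α^L = max_{j∈D} max_{x∈X(j)} min_{k∈E(j)} α(x,e_k)`. -/
def alphaL {m n : ℕ} (A B : Matrix (Fin m) (Fin n) ℝ) : ℝ :=
  sSup {v | ∃ j ∈ Dset B, ∃ x ∈ XReg B j, v = minE A B j x}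

/-- Highest leader payoff `α^H = max_{j : X(j)≠∅} max_{x∈X(j)} α(x,e_j)`. -/
def alphaH {m n : ℕ} (A B : Matrix (Fin m) (Fin n) ℝ) : ℝ :=
  sSup {v | ∃ j, ∃ x ∈ XReg B j, v = purePay A x j}

/-- Commitment optimal strategies of the leader (player I). -/
def XLset {m n : ℕ} (A B : Matrix (Fin m) (Fin n) ℝ) : Set (Fin m → ℝ) :=
  {x | ∃ j ∈ Dset B, x ∈ XReg B j ∧ minE A B j x = alphaL A B}

/-- Non-degeneracy for player I: no mixed strategy of player I has more pure best
replies (among player II's pure strategies) than the size of its support. -/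
def NondegFor {m n : ℕ} (B : Matrix (Fin m) (Fin n) ℝ) : Prop :=
  ∀ x ∈ Simp m, (BRII B x).ncard ≤ {i | x i ≠ 0}.ncard

/-- Nash equilibrium of the bimatrix game `(A,B)`. -/
def isNE {m n : ℕ} (A B : Matrix (Fin m) (Fin n) ℝ) (x : Fin m → ℝ) (y : Fin n → ℝ) : Prop :=
  x ∈ Simp m ∧ y ∈ Simp n ∧
  (∀ x' ∈ Simp m, pay A x' y ≤ pay A x y) ∧
  (∀ y' ∈ Simp n, pay B x y' ≤ pay B x y)

/-- Strategies of player I appearing in some Nash equilibrium. -/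
def NEX {m n : ℕ} (A B : Matrix (Fin m) (Fin n) ℝ) : Set (Fin m → ℝ) :=
  {x | ∃ y, isNE A B x y}

/-- Strategies of player II appearing in some Nash equilibrium. -/
def NEY {m n : ℕ} (A B : Matrix (Fin m) (Fin n) ℝ) : Set (Fin n → ℝ) :=
  {y | ∃ x, isNE A B x y}

/-- Weakly unilaterally competitive bimatrix game. -/
def WUC {m n : ℕ} (A B : Matrix (Fin m) (Fin n) ℝ) : Prop :=
  (∀ x₁ ∈ Simp m, ∀ x₂ ∈ Simp m, ∀ y ∈ Simp n,
    (pay A x₁ y > pay A x₂ y → pay B x₁ y ≤ pay B x₂ y) ∧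
    (pay A x₁ y = pay A x₂ y → pay B x₁ y = pay B x₂ y)) ∧
  (∀ y₁ ∈ Simp n, ∀ y₂ ∈ Simp n, ∀ x ∈ Simp m,
    (pay B x y₁ > pay B x y₂ → pay A x y₁ ≤ pay A x y₂) ∧
    (pay B x y₁ = pay B x y₂ → pay A x y₁ = pay A x y₂))

/-!
Under the hypothesis, every leader payoff `α(x, e_j)` with `x ∈ X(j)` is at most
`min_k α(x, e_k)`, so all three suprema run over sets that dominate each other. The only
non-formal input is that every `x ∈ X` lies in the best-reply region of some column `j ∈ D`:
moving `x` slightly towards the barycenter gives fully mixed strategies, some column is a best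
reply at such points arbitrarily close to `x`, and best-reply regions are closed.
-/

open Filter Topology

section

variable {m n : ℕ}

lemma purePay_le_maxBR (A B : Matrix (Fin m) (Fin n) ℝ) {x : Fin m → ℝ} {j : Fin n}
    (hj : j ∈ BRII B x) : purePay A x j ≤ maxBR A B x :=
  le_csSup ((Set.finite_range (purePay A x)).subset
    (by rintro _ ⟨k, -, rfl⟩; exact ⟨k, rfl⟩)).bddAbove ⟨j, hj, rfl⟩

lemma minPure_le_purePay (A : Matrix (Fin m) (Fin n) ℝ) (x : Fin m → ℝ) (j : Fin n) :
    minPure A x ≤ purePay A x j :=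
  csInf_le ((Set.finite_range (purePay A x)).subset
    (by rintro _ ⟨k, rfl⟩; exact ⟨k, rfl⟩)).bddBelow ⟨j, rfl⟩

lemma minE_le_purePay (A B : Matrix (Fin m) (Fin n) ℝ) (j : Fin n) (x : Fin m → ℝ) :
    minE A B j x ≤ purePay A x j :=
  csInf_le ((Set.finite_range (purePay A x)).subset
    (by rintro _ ⟨k, -, rfl⟩; exact ⟨k, rfl⟩)).bddBelow ⟨j, fun _ => rfl, rfl⟩

lemma minPure_le_minE (A B : Matrix (Fin m) (Fin n) ℝ) (j : Fin n) (x : Fin m → ℝ) :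
    minPure A x ≤ minE A B j x :=
  le_csInf ⟨_, j, fun _ => rfl, rfl⟩ (by rintro _ ⟨k, -, rfl⟩; exact minPure_le_purePay A x k)

lemma matVal_eq_zero_of_isEmpty [IsEmpty (Fin n)] (A : Matrix (Fin m) (Fin n) ℝ) :
    matVal A = 0 := by
  have hmin : ∀ x, minPure A x = 0 := fun x => by simp [minPure]
  exact le_antisymm (Real.sSup_nonpos <| by rintro _ ⟨x, -, rfl⟩; exact (hmin x).le)
    (Real.sSup_nonneg <| by rintro _ ⟨x, -, rfl⟩; exact (hmin x).ge)

lemma alphaL_eq_zero_of_isEmpty [IsEmpty (Fin n)] (A B : Matrix (Fin m) (Fin n) ℝ) :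
    alphaL A B = 0 := by
  simp [alphaL]

lemma exists_mem_BRII [Nonempty (Fin n)] (B : Matrix (Fin m) (Fin n) ℝ) (x : Fin m → ℝ) :
    ∃ j, j ∈ BRII B x :=
  Finite.exists_max (purePay B x)

lemma isClosed_setOf_mem_BRII (B : Matrix (Fin m) (Fin n) ℝ) (j : Fin n) :
    IsClosed {x | j ∈ BRII B x} := by
  show IsClosed {x | ∀ k, purePay B x k ≤ purePay B x j}
  simp only [Set.ofPred_forall]
  exact isClosed_iInter fun k =>
    isClosed_le (by unfold purePay; fun_prop) (by unfold purePay; fun_prop)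

lemma exists_mem_Dset_of_mem_Simp [Nonempty (Fin n)] (B : Matrix (Fin m) (Fin n) ℝ)
    {x : Fin m → ℝ} (hx : x ∈ Simp m) : ∃ j ∈ Dset B, x ∈ XReg B j := by
  obtain ⟨i₀, -⟩ := Finset.nonempty_of_sum_ne_zero (hx.2.symm ▸ one_ne_zero : ∑ i, x i ≠ 0)
  have : Nonempty (Fin m) := ⟨i₀⟩
  let u : stdSimplex ℝ (Fin m) := stdSimplex.barycenter
  let seg : ℝ → Fin m → ℝ := AffineMap.lineMap x u.val
  have hseg : ∀ t ∈ Set.Ioo (0 : ℝ) 1, seg t ∈ Simp m ∧ ∀ i, 0 < seg t i := by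
    intro t ⟨ht₀, ht₁⟩
    refine ⟨(convex_stdSimplex ℝ (Fin m)).lineMap_mem hx u.2 ⟨ht₀.le, ht₁.le⟩, fun i => ?_⟩
    have hu : 0 < u.val i := by simp [u, i₀.pos]
    simp only [seg, AffineMap.lineMap_apply_module, Pi.add_apply, Pi.smul_apply, smul_eq_mul]
    nlinarith [hx.1 i]
  have hlim : Tendsto seg (𝓝[>] 0) (𝓝 x) := by
    simpa [seg] using (AffineMap.lineMap_continuous (p := x) (q := u.val)).tendsto' 0 x
      (AffineMap.lineMap_apply_zero _ _) |>.mono_left nhdsWithin_le_nhds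
  obtain ⟨j, hj⟩ : ∃ j, ∃ᶠ t in 𝓝[>] (0 : ℝ), j ∈ BRII B (seg t) :=
    frequently_exists.mp (Eventually.frequently (.of_forall fun t => exists_mem_BRII B (seg t)))
  obtain ⟨t, hjt, ht⟩ := (hj.and_eventually (Ioo_mem_nhdsGT one_pos)).exists
  exact ⟨j, ⟨seg t, ⟨(hseg t ht).1, hjt⟩, (hseg t ht).2⟩, hx,
    (isClosed_setOf_mem_BRII B j).mem_of_frequently_of_tendsto hj hlim⟩

end

/-- sufficient condition (suff): if for every `x ∈ X`,
`max_{j ∈ BR_II(x)} α(x,e_j) = min_j α(x,e_j)`, then `v_A = α^L = α^H`. -/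
theorem stmt5 {m n : ℕ} (A B : Matrix (Fin m) (Fin n) ℝ)
    (hsuff : ∀ x ∈ Simp m, maxBR A B x = minPure A x) :
    matVal A = alphaL A B ∧ alphaL A B = alphaH A B := by
  have hleader : ∀ j, ∀ x ∈ XReg B j, purePay A x j ≤ minPure A x := fun j x hx =>
    (purePay_le_maxBR A B hx.2).trans (hsuff x hx.1).le
  refine ⟨?_, csSup_eq_csSup_of_forall_exists_le ?_ ?_⟩
  · rcases isEmpty_or_nonempty (Fin n) with _ | _
    · rw [matVal_eq_zero_of_isEmpty, alphaL_eq_zero_of_isEmpty]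
    refine csSup_eq_csSup_of_forall_exists_le ?_ ?_
    · rintro _ ⟨x, hx, rfl⟩
      obtain ⟨j, hj, hxj⟩ := exists_mem_Dset_of_mem_Simp B hx
      exact ⟨_, ⟨j, hj, x, hxj, rfl⟩, minPure_le_minE A B j x⟩
    · rintro _ ⟨j, -, x, hxj, rfl⟩
      exact ⟨_, ⟨x, hxj.1, rfl⟩, (minE_le_purePay A B j x).trans (hleader j x hxj)⟩
  · rintro _ ⟨j, -, x, hxj, rfl⟩
    exact ⟨_, ⟨j, x, hxj, rfl⟩, minE_le_purePay A B j x⟩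
  · rintro _ ⟨j, x, hxj, rfl⟩
    have : Nonempty (Fin n) := ⟨j⟩
    obtain ⟨k, hk, hxk⟩ := exists_mem_Dset_of_mem_Simp B hxj.1
    exact ⟨_, ⟨k, hk, x, hxk, rfl⟩, (hleader j x hxj).trans (minPure_le_minE A B k x)⟩
end
end

section
/- If a bimatrix game Γ is weakly unilaterally competitive, then for every x ∈ X, max_{j∈BR_II(x)} α(x,e_j) = min_{j} α(x,e_j) (i.e. the sufficient condition (suff) holds for player I; by symmetry the analogous condition holds for player II). -/
open Matrix

noncomputable section

/-!
Compare two pure strategies `e_j`, `e_k` of player II under weak unilateral competitiveness: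
if `j` is a best reply to `x`, then `β(x,e_j) ≥ β(x,e_k)` forces `α(x,e_j) ≤ α(x,e_k)`.
So every best reply of player II attains `min_k α(x,e_k)`, and so does their maximum.
-/

lemma single_mem_simp {n : ℕ} (j : Fin n) : (Pi.single j 1 : Fin n → ℝ) ∈ Simp n :=
  single_mem_stdSimplex ℝ j

lemma pay_single {m n : ℕ} (A : Matrix (Fin m) (Fin n) ℝ) (x : Fin m → ℝ) (j : Fin n) :
    pay A x (Pi.single j 1) = purePay A x j := by
  simp only [pay, purePay, dotProduct_mulVec, dotProduct_single, mul_one]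

section

variable {m n : ℕ} {A B : Matrix (Fin m) (Fin n) ℝ} {x : Fin m → ℝ}

lemma WUC.purePay_le_of_purePay_le (hwuc : WUC A B) (hx : x ∈ Simp m) {j k : Fin n}
    (h : purePay B x k ≤ purePay B x j) : purePay A x j ≤ purePay A x k := by
  have hjk := hwuc.2 _ (single_mem_simp j) _ (single_mem_simp k) x hx
  simp only [pay_single] at hjk
  rcases h.lt_or_eq with h | h
  · exact hjk.1 h
  · exact (hjk.2 h.symm).le

lemma minPure_eq_of_forall_le {j : Fin n} (h : ∀ k, purePay A x j ≤ purePay A x k) :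
    minPure A x = purePay A x j :=
  IsLeast.csInf_eq ⟨⟨j, rfl⟩, by rintro _ ⟨k, rfl⟩; exact h k⟩

lemma BRII_nonempty [Nonempty (Fin n)] (B : Matrix (Fin m) (Fin n) ℝ) (x : Fin m → ℝ) :
    (BRII B x).Nonempty :=
  Finite.exists_max (purePay B x)

lemma maxBR_eq_of_forall_mem_BRII {c : ℝ} (hne : (BRII B x).Nonempty)
    (h : ∀ j ∈ BRII B x, purePay A x j = c) : maxBR A B x = c := by
  obtain ⟨j₀, hj₀⟩ := hne
  have hvalues : {w | ∃ j ∈ BRII B x, w = purePay A x j} = {c} := by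
    ext w
    constructor
    · rintro ⟨j, hj, rfl⟩
      exact h j hj
    · rintro rfl
      exact ⟨j₀, hj₀, (h j₀ hj₀).symm⟩
  rw [maxBR, hvalues, csSup_singleton]

end

/-- a weakly unilaterally competitive game satisfies the sufficient
condition (suff) for player I: for every `x ∈ X`,
`max_{j∈BR_II(x)} α(x,e_j) = min_j α(x,e_j)`. -/
theorem stmt7 {m n : ℕ} (A B : Matrix (Fin m) (Fin n) ℝ) (hwuc : WUC A B) :
    ∀ x ∈ Simp m, maxBR A B x = minPure A x := by
  intro x hx
  rcases isEmpty_or_nonempty (Fin n) with hn | hn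
  · -- no columns: both sides are `sSup ∅ = sInf ∅ = 0`
    simp [maxBR, minPure]
  · refine maxBR_eq_of_forall_mem_BRII (BRII_nonempty B x) fun j hj => ?_
    exact (minPure_eq_of_forall_le fun k => hwuc.purePay_le_of_purePay_le hx (hj k)).symm
end
end

section
/- Lemma (characterization of non-Nash commitment optimal strategies): Let Γ be a 2×2 bimatrix game that is non-degenerate for the leader (player I). Then there exists a commitment optimal strategy x^L ∈ X^L with x^L ∉ NE(X) if and only if both of the following hold: (ℓ1) some pure strategy of player I is strongly dominated (there exist i and x' ∈ X with α(x',e_j) > α(e_i,e_j) for all j), and (ℓ2) player I has an equalizing strategy x^d ∈ X over the follower's payoffs (i.e. (x^dᵀB)_1 = (x^dᵀB)_2) such that for every Nash equilibrium (x^N,y^N) of Γ there is a pure strategy j with α(x^d,e_j) ≥ α(x^N,y^N). Moreover, in this case Y^L = NE(Y), i.e. the commitment optimal strategies of player II (as leader in Γ^II) coincide with his Nash equilibrium strategies. -/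
open Matrix

noncomputable section

/-!
Non-degeneracy means that against each pure strategy of player I the follower strictly prefers
one column. Either the same column both times, and then it is strictly dominant and no strategy
of player I equalizes the two columns; or the rows make him prefer different columns, and there
is a unique, fully mixed equalizer `xs`.

A commitment optimal `x` that is not an equalizer is a strict best-reply point of its column `l`.
Near such a point, maximizing `α(·, e_l)` over the half-space `X(l)` is the same as maximizing it
over all of `X`, so `(x, e_l)` is an equilibrium. An equalizer is an equilibrium strategy as soon
as no row is strictly dominated: by the intermediate value theorem player II can then make
player I indifferent. So a non-Nash commitment optimal strategy needs (ℓ1) and an equalizer.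
In that case a row `i` strictly dominates, `(e_i, e_j)` is the unique equilibrium, and both sides
of the equivalence reduce to `α(e_i, e_j) ≤ α(xs, e_j')`. Leading in `Γ^II`, player II always
faces the dominant row `i`, so his commitment optimum is `e_j`, his unique equilibrium strategy.
-/

section Simplex

variable {ι : Type*} [Fintype ι] {x v w : ι → ℝ}

theorem dotProduct_le_of_mem_stdSimplex {c : ℝ} (hx : x ∈ stdSimplex ℝ ι) (hv : ∀ k, v k ≤ c) :
    x ⬝ᵥ v ≤ c :=
  calc x ⬝ᵥ v = ∑ k, x k * v k := rfl
    _ ≤ ∑ k, x k * c := Finset.sum_le_sum fun k _ => mul_le_mul_of_nonneg_left (hv k) (hx.1 k)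
    _ = c := by rw [← Finset.sum_mul, hx.2, one_mul]

theorem dotProduct_const_of_mem_stdSimplex (hx : x ∈ stdSimplex ℝ ι) (c : ℝ) :
    x ⬝ᵥ (fun _ => c) = c := by
  simp only [dotProduct, ← Finset.sum_mul, hx.2, one_mul]

theorem dotProduct_lt_dotProduct_of_mem_stdSimplex (hx : x ∈ stdSimplex ℝ ι)
    (h : ∀ k, v k < w k) : x ⬝ᵥ v < x ⬝ᵥ w := by
  obtain ⟨k, hk⟩ : ∃ k, 0 < x k := by
    by_contra! hle
    linarith [hx.2, Finset.sum_nonpos fun k (_ : k ∈ Finset.univ) => hle k]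
  rw [← sub_pos, ← dotProduct_sub]
  exact Finset.sum_pos' (fun l _ => mul_nonneg (hx.1 l) (sub_pos.2 (h l)).le)
    ⟨k, Finset.mem_univ _, mul_pos hk (sub_pos.2 (h k))⟩

end Simplex

theorem Convex.isMaxOn_of_isMaxOn_inter_nonneg {E : Type*} [AddCommGroup E] [Module ℝ E]
    {S : Set E} (hS : Convex ℝ S) {f g : E →ₗ[ℝ] ℝ} {x : E} (hx : x ∈ S) (hgx : 0 < g x)
    (hmax : IsMaxOn f (S ∩ {z | 0 ≤ g z}) x) : IsMaxOn f S x := by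
  intro z hz
  -- move from `x` towards `z` just far enough to stay in the half-space `0 ≤ g`
  set t := g x / (g x + |g z|)
  have hden : 0 < g x + |g z| := by positivity
  have ht : t * (g x + |g z|) = g x := div_mul_cancel₀ _ hden.ne'
  have ht0 : 0 < t := div_pos hgx hden
  have ht1 : t ≤ 1 := (div_le_one hden).2 (le_add_of_nonneg_right (abs_nonneg _))
  have hw : (1 - t) • x + t • z ∈ S := hS hx hz (sub_nonneg.2 ht1) ht0.le (by ring)
  have hgw : 0 ≤ g ((1 - t) • x + t • z) := by
    simp only [map_add, map_smul, smul_eq_mul]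
    nlinarith [neg_abs_le (g z)]
  have hfw : f ((1 - t) • x + t • z) ≤ f x := hmax ⟨hw, hgw⟩
  simp only [map_add, map_smul, smul_eq_mul] at hfw
  show f z ≤ f x
  nlinarith

section FinTwo

variable {i i' : Fin 2}

theorem Fin.two_eq_or_eq_of_ne (hi : i ≠ i') (k : Fin 2) : k = i ∨ k = i' := by
  revert i i' k; decide

theorem Fin.sum_univ_two_of_ne (hi : i ≠ i') (f : Fin 2 → ℝ) : ∑ k, f k = f i + f i' := by
  obtain ⟨rfl, rfl⟩ | ⟨rfl, rfl⟩ : (i = 0 ∧ i' = 1) ∨ (i = 1 ∧ i' = 0) := by revert i i'; decide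
  · exact Fin.sum_univ_two f
  · rw [Fin.sum_univ_two, add_comm]

theorem Fin.two_apply_eq_iff_of_ne {α : Type*} {j j' : Fin 2} (hj : j ≠ j') (f : Fin 2 → α) :
    f j = f j' ↔ f 0 = f 1 := by
  obtain ⟨rfl, rfl⟩ | ⟨rfl, rfl⟩ : (j = 0 ∧ j' = 1) ∨ (j = 1 ∧ j' = 0) := by revert j j'; decide
  · rfl
  · exact eq_comm

variable {x z : Fin 2 → ℝ}

theorem apply_eq_one_sub_of_mem_Simp (hi : i ≠ i') (hx : x ∈ Simp 2) : x i' = 1 - x i := by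
  linarith [hx.2, Fin.sum_univ_two_of_ne hi x]

theorem eq_of_mem_Simp_of_apply_eq (hi : i ≠ i') (hx : x ∈ Simp 2) (hz : z ∈ Simp 2)
    (h : x i = z i) : x = z := by
  funext k
  rcases Fin.two_eq_or_eq_of_ne hi k with rfl | rfl
  · exact h
  · rw [apply_eq_one_sub_of_mem_Simp hi hx, apply_eq_one_sub_of_mem_Simp hi hz, h]

theorem dotProduct_sub_dotProduct_of_mem_Simp (hi : i ≠ i') (hx : x ∈ Simp 2) (hz : z ∈ Simp 2)
    (v : Fin 2 → ℝ) : x ⬝ᵥ v - z ⬝ᵥ v = (x i - z i) * (v i - v i') := by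
  simp only [dotProduct, Fin.sum_univ_two_of_ne hi, apply_eq_one_sub_of_mem_Simp hi hx,
    apply_eq_one_sub_of_mem_Simp hi hz]
  ring

theorem eq_single_of_le_dotProduct (hi : i ≠ i') (hx : x ∈ Simp 2) {v : Fin 2 → ℝ}
    (hv : v i' < v i) (h : v i ≤ x ⬝ᵥ v) : x = Pi.single i 1 := by
  have hid := dotProduct_sub_dotProduct_of_mem_Simp hi hx (single_mem_stdSimplex ℝ i) v
  rw [single_one_dotProduct, Pi.single_eq_same] at hid
  have hxi : 1 ≤ x i := by nlinarith
  exact eq_of_mem_Simp_of_apply_eq hi hx (single_mem_stdSimplex ℝ i)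
    (by rw [Pi.single_eq_same]; linarith [(mem_Icc_of_mem_stdSimplex hx i).2])

end FinTwo

section Game

variable {m n : ℕ}

theorem purePay_single (A : Matrix (Fin m) (Fin n) ℝ) (k : Fin m) (l : Fin n) :
    purePay A (Pi.single k 1) l = A k l := by
  rw [purePay, single_one_vecMul, row_apply]

theorem pay_single_right (A : Matrix (Fin m) (Fin n) ℝ) (x : Fin m → ℝ) (l : Fin n) :
    pay A x (Pi.single l 1) = purePay A x l := by
  rw [pay, mulVec_single_one]
  rfl

theorem purePay_transpose (A : Matrix (Fin m) (Fin n) ℝ) (y : Fin n → ℝ) (k : Fin m) :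
    purePay Aᵀ y k = (A *ᵥ y) k := by
  rw [purePay, vecMul_transpose]

theorem mem_BRII_iff_of_ne {B : Matrix (Fin m) (Fin 2) ℝ} {x : Fin m → ℝ} {l l' : Fin 2}
    (hl : l ≠ l') : l ∈ BRII B x ↔ purePay B x l' ≤ purePay B x l := by
  refine ⟨fun h => h l', fun h k => ?_⟩
  rcases Fin.two_eq_or_eq_of_ne hl k with rfl | rfl
  · exact le_rfl
  · exact h

theorem mem_BRII_of_equalizer {B : Matrix (Fin m) (Fin 2) ℝ} {x : Fin m → ℝ}
    (h : purePay B x 0 = purePay B x 1) (l : Fin 2) : l ∈ BRII B x := fun k => by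
  fin_cases l <;> fin_cases k <;> simp [h]

variable {A B : Matrix (Fin m) (Fin n) ℝ} {x : Fin m → ℝ}

theorem isNE_single_right {l : Fin n} (hx : x ∈ Simp m) (hA : ∀ k, A k l ≤ purePay A x l)
    (hB : l ∈ BRII B x) : isNE A B x (Pi.single l 1) := by
  refine ⟨hx, single_mem_stdSimplex ℝ l, fun x' hx' => ?_, fun y' hy' => ?_⟩
  · rw [pay_single_right, pay_single_right]
    exact dotProduct_le_of_mem_stdSimplex hx' hA
  · rw [pay_single_right, pay, dotProduct_mulVec, dotProduct_comm]
    exact dotProduct_le_of_mem_stdSimplex hy' hB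

theorem isNE_of_indifferent {y : Fin n → ℝ} (hx : x ∈ Simp m) (hy : y ∈ Simp n) {c d : ℝ}
    (hA : ∀ k, (A *ᵥ y) k = c) (hB : ∀ l, purePay B x l = d) : isNE A B x y := by
  have hpayA : ∀ x' ∈ Simp m, pay A x' y = c := fun x' hx' => by
    rw [pay, funext hA, dotProduct_const_of_mem_stdSimplex hx']
  have hpayB : ∀ y' ∈ Simp n, pay B x y' = d := fun y' hy' => by
    rw [pay, dotProduct_mulVec, dotProduct_comm, show x ᵥ* B = fun _ => d from funext hB,
      dotProduct_const_of_mem_stdSimplex hy']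
  exact ⟨hx, hy, fun x' hx' => (hpayA x' hx').trans (hpayA x hx).symm |>.le,
    fun y' hy' => (hpayB y' hy').trans (hpayB y hy).symm |>.le⟩

theorem minE_eq_purePay (hB : Function.Injective Bᵀ) (l : Fin n) (x : Fin m → ℝ) :
    minE A B l x = purePay A x l := by
  have hE : Ecols B l = {l} := by
    ext k
    exact ⟨fun hk => hB (funext hk), fun hk => hk ▸ fun _ => rfl⟩
  simp [minE, hE]

theorem purePay_le_alphaL (hB : Function.Injective Bᵀ) {l : Fin n} (hl : l ∈ Dset B)
    (hx : x ∈ XReg B l) : purePay A x l ≤ alphaL A B := by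
  refine le_csSup ⟨∑ k, ∑ l, |A k l|, ?_⟩ ⟨l, hl, x, hx, (minE_eq_purePay hB l x).symm⟩
  rintro _ ⟨l', -, z, hz, rfl⟩
  rw [minE_eq_purePay hB]
  refine dotProduct_le_of_mem_stdSimplex hz.1 fun k => (le_abs_self _).trans ?_
  exact (Finset.single_le_sum (fun l _ => abs_nonneg (A k l)) (Finset.mem_univ l')).trans
    (Finset.single_le_sum (fun k _ => Finset.sum_nonneg fun l _ => abs_nonneg (A k l))
      (Finset.mem_univ k))

theorem alphaL_eq (hB : Function.Injective Bᵀ) {l : Fin n} (hl : l ∈ Dset B) (hx : x ∈ XReg B l)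
    (hub : ∀ l' ∈ Dset B, ∀ z ∈ XReg B l', purePay A z l' ≤ purePay A x l) :
    alphaL A B = purePay A x l := by
  refine IsGreatest.csSup_eq ⟨⟨l, hl, x, hx, (minE_eq_purePay hB l x).symm⟩, ?_⟩
  rintro _ ⟨l', hl', z, hz, rfl⟩
  rw [minE_eq_purePay hB]
  exact hub l' hl' z hz

end Game

theorem NondegFor.apply_ne {m : ℕ} {B : Matrix (Fin m) (Fin 2) ℝ} (hnd : NondegFor B) (r : Fin m) :
    B r 0 ≠ B r 1 := by
  intro heq
  have hBR : BRII B (Pi.single r 1) = Set.univ := by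
    refine Set.eq_univ_of_forall fun k k' => ?_
    rw [purePay_single, purePay_single]
    fin_cases k <;> fin_cases k' <;> simp [heq]
  have hsupp : {k | (Pi.single r (1 : ℝ) : Fin m → ℝ) k ≠ 0} = {r} := by
    ext k
    by_cases hk : k = r <;> simp [hk]
  have := hnd _ (single_mem_stdSimplex ℝ r)
  rw [hBR, hsupp, Set.ncard_univ, Set.ncard_singleton, Nat.card_eq_fintype_card,
    Fintype.card_fin] at this
  omega

theorem injective_transpose_of_apply_ne {m : ℕ} {B : Matrix (Fin m) (Fin 2) ℝ} {r : Fin m}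
    (h : B r 0 ≠ B r 1) : Function.Injective Bᵀ := by
  intro a b hab
  have := congrFun hab r
  fin_cases a <;> fin_cases b <;> simp_all [eq_comm]

/-- Condition (ℓ1). -/
def HasStrictlyDominatedRow {m n : ℕ} (A : Matrix (Fin m) (Fin n) ℝ) : Prop :=
  ∃ i : Fin m, ∃ x' ∈ Simp m, ∀ j : Fin n, purePay A (Pi.single i (1 : ℝ)) j < purePay A x' j

/-- Condition (ℓ2). -/
def HasEqualizerAboveNE (A B : Matrix (Fin 2) (Fin 2) ℝ) : Prop :=
  ∃ xd ∈ Simp 2, purePay B xd 0 = purePay B xd 1 ∧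
    ∀ (xN yN : Fin 2 → ℝ), isNE A B xN yN → ∃ j : Fin 2, pay A xN yN ≤ purePay A xd j

theorem hasStrictlyDominatedRow_of_lt {m n : ℕ} {A : Matrix (Fin m) (Fin n) ℝ} {i k : Fin m}
    (h : ∀ l, A i l < A k l) : HasStrictlyDominatedRow A :=
  ⟨i, _, single_mem_stdSimplex ℝ k, fun l => by simpa only [purePay_single] using h l⟩

theorem HasStrictlyDominatedRow.exists_lt {n : ℕ} {A : Matrix (Fin 2) (Fin n) ℝ}
    (h : HasStrictlyDominatedRow A) : ∃ i i', i ≠ i' ∧ ∀ l, A i' l < A i l := by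
  obtain ⟨i', x', hx', hlt⟩ := h
  obtain ⟨i, hi⟩ := exists_ne i'
  refine ⟨i, i', hi, fun l => ?_⟩
  have hid := dotProduct_sub_dotProduct_of_mem_Simp hi hx' (single_mem_stdSimplex ℝ i')
    fun k => A k l
  rw [Pi.single_eq_of_ne hi, sub_zero, single_one_dotProduct] at hid
  have hpos : 0 < x' i * (A i l - A i' l) := by
    rw [← hid, sub_pos, ← purePay_single A i' l]
    exact hlt l
  exact sub_pos.1 (pos_of_mul_pos_right hpos (hx'.1 i))

theorem mem_NEX_of_equalizer {n : ℕ} {A B : Matrix (Fin 2) (Fin n) ℝ}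
    (hA : ¬ HasStrictlyDominatedRow A) {x : Fin 2 → ℝ} (hx : x ∈ Simp 2) {d : ℝ}
    (hB : ∀ l, purePay B x l = d) : x ∈ NEX A B := by
  obtain ⟨l, hl⟩ : ∃ l, A 0 l ≤ A 1 l := by
    by_contra! h
    exact hA (hasStrictlyDominatedRow_of_lt h)
  obtain ⟨l', hl'⟩ : ∃ l, A 1 l ≤ A 0 l := by
    by_contra! h
    exact hA (hasStrictlyDominatedRow_of_lt h)
  obtain ⟨y, hy, hind⟩ : ∃ y ∈ Simp n, (A *ᵥ y) 0 - (A *ᵥ y) 1 = 0 :=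
    (convex_stdSimplex ℝ (Fin n)).isPreconnected.intermediate_value
      (single_mem_stdSimplex ℝ l) (single_mem_stdSimplex ℝ l')
      (by fun_prop : Continuous fun y => (A *ᵥ y) 0 - (A *ᵥ y) 1).continuousOn
      ⟨by simpa [mulVec_single_one] using hl, by simpa [mulVec_single_one] using hl'⟩
  refine ⟨y, isNE_of_indifferent hx hy (c := (A *ᵥ y) 0) (fun k => ?_) hB⟩
  fin_cases k
  · rfl
  · exact (sub_eq_zero.1 hind).symm

theorem isNE_single_of_mem_XReg_of_lt {m : ℕ} {A B : Matrix (Fin m) (Fin 2) ℝ}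
    (hB : Function.Injective Bᵀ) {x : Fin m → ℝ} {l l' : Fin 2} (hll' : l ≠ l')
    (hl : l ∈ Dset B) (hx : x ∈ XReg B l) (hopt : purePay A x l = alphaL A B)
    (hlt : purePay B x l' < purePay B x l) : isNE A B x (Pi.single l 1) := by
  have hmax : IsMaxOn (LinearMap.proj l ∘ₗ A.vecMulLinear) (Simp m) x := by
    refine (convex_stdSimplex ℝ (Fin m)).isMaxOn_of_isMaxOn_inter_nonneg
      (g := LinearMap.proj l ∘ₗ B.vecMulLinear - LinearMap.proj l' ∘ₗ B.vecMulLinear)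
      hx.1 (sub_pos.2 hlt) ?_
    rintro z ⟨hz, hgz⟩
    have hzl : z ∈ XReg B l := ⟨hz, (mem_BRII_iff_of_ne hll').2 (sub_nonneg.1 hgz)⟩
    exact (purePay_le_alphaL hB hl hzl).trans hopt.ge
  refine isNE_single_right hx.1 (fun k => ?_) hx.2
  rw [← purePay_single A k l]
  exact hmax (single_mem_stdSimplex ℝ k)

theorem equalizer_of_mem_XLset_of_not_mem_NEX {m : ℕ} {A B : Matrix (Fin m) (Fin 2) ℝ}
    (hB : Function.Injective Bᵀ) {x : Fin m → ℝ} (hx : x ∈ XLset A B) (hN : x ∉ NEX A B) :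
    purePay B x 0 = purePay B x 1 := by
  obtain ⟨l, hl, hx, hopt⟩ := hx
  rw [minE_eq_purePay hB] at hopt
  by_contra heq
  obtain ⟨l', hl'⟩ := exists_ne l
  have hlt : purePay B x l' < purePay B x l := (hx.2 l').lt_of_ne
    fun h' => heq ((Fin.two_apply_eq_iff_of_ne hl' (purePay B x)).1 h')
  exact hN ⟨_, isNE_single_of_mem_XReg_of_lt hB hl'.symm hl hx hopt hlt⟩

theorem XLset_subset_NEX {A B : Matrix (Fin 2) (Fin 2) ℝ} (hB : Function.Injective Bᵀ)
    (h : ¬ (HasStrictlyDominatedRow A ∧ ∃ x ∈ Simp 2, purePay B x 0 = purePay B x 1)) :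
    XLset A B ⊆ NEX A B := by
  intro x hx
  by_contra hN
  have heq := equalizer_of_mem_XLset_of_not_mem_NEX hB hx hN
  obtain ⟨-, -, ⟨hxS, -⟩, -⟩ := hx
  refine hN (mem_NEX_of_equalizer (fun hA => h ⟨hA, x, hxS, heq⟩) hxS (d := purePay B x 0)
    fun k => ?_)
  fin_cases k
  · rfl
  · exact heq.symm

structure CrossedPrefs (B : Matrix (Fin 2) (Fin 2) ℝ) (i i' j j' : Fin 2) : Prop where
  row_ne : i ≠ i'
  col_ne : j ≠ j'
  lt_left : B i j' < B i j
  lt_right : B i' j < B i' j'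

theorem exists_crossedPrefs {B : Matrix (Fin 2) (Fin 2) ℝ} (hrow : ∀ r, B r 0 ≠ B r 1)
    {i i' : Fin 2} (hi : i ≠ i') (heq : ∃ x ∈ Simp 2, purePay B x 0 = purePay B x 1) :
    ∃ j j', CrossedPrefs B i i' j j' := by
  obtain ⟨x, hx, hx01⟩ := heq
  have key : ∀ j j', j ≠ j' → B i j' < B i j → B i' j < B i' j' := by
    intro j j' hj hlt
    have hne : B i' j ≠ B i' j' := fun h => hrow i' ((Fin.two_apply_eq_iff_of_ne hj (B i')).1 h)
    refine (lt_or_gt_of_ne hne).resolve_right fun hgt => ?_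
    -- otherwise column `j` is strictly dominant and no strategy equalizes the two columns
    have hdom : ∀ r, B r j' < B r j := fun r => by
      rcases Fin.two_eq_or_eq_of_ne hi r with rfl | rfl <;> assumption
    exact (dotProduct_lt_dotProduct_of_mem_stdSimplex hx hdom).ne
      ((Fin.two_apply_eq_iff_of_ne hj.symm (purePay B x)).2 hx01)
  rcases lt_or_gt_of_ne (hrow i) with h | h
  · exact ⟨1, 0, hi, by decide, h, key 1 0 (by decide) h⟩
  · exact ⟨0, 1, hi, by decide, h, key 0 1 (by decide) h⟩

namespace CrossedPrefs

variable {A B : Matrix (Fin 2) (Fin 2) ℝ} {i i' j j' : Fin 2}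

theorem gap_sub_gap (h : CrossedPrefs B i i' j j') {x z : Fin 2 → ℝ} (hx : x ∈ Simp 2)
    (hz : z ∈ Simp 2) :
    (purePay B x j - purePay B x j') - (purePay B z j - purePay B z j') =
      (x i - z i) * ((B i j - B i j') - (B i' j - B i' j')) := by
  have := dotProduct_sub_dotProduct_of_mem_Simp h.row_ne hx hz
    ((fun r => B r j) - fun r => B r j')
  rwa [dotProduct_sub, dotProduct_sub] at this

theorem exists_equalizer (h : CrossedPrefs B i i' j j') :
    ∃ xs ∈ Simp 2, (∀ k, 0 < xs k) ∧ ∀ x ∈ Simp 2, purePay B x 0 = purePay B x 1 ↔ x = xs := by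
  have hκ : 0 < (B i j - B i j') - (B i' j - B i' j') := by linarith [h.lt_left, h.lt_right]
  have hei := single_mem_stdSimplex ℝ i
  have hei' := single_mem_stdSimplex ℝ i'
  obtain ⟨xs, hxs, hgap⟩ : ∃ xs ∈ Simp 2, purePay B xs j - purePay B xs j' = 0 :=
    (convex_stdSimplex ℝ (Fin 2)).isPreconnected.intermediate_value hei' hei
      (by unfold purePay; fun_prop :
        Continuous fun x => purePay B x j - purePay B x j').continuousOn
      ⟨by simp only [purePay_single]; linarith [h.lt_right],
        by simp only [purePay_single]; linarith [h.lt_left]⟩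
  have h1 := h.gap_sub_gap hxs hei
  have h0 := h.gap_sub_gap hxs hei'
  simp only [purePay_single, Pi.single_eq_same, Pi.single_eq_of_ne h.row_ne] at h1 h0
  have hpos : 0 < xs i := by nlinarith [h.lt_right]
  have hlt : xs i < 1 := by nlinarith [h.lt_left]
  refine ⟨xs, hxs, fun k => ?_, fun x hx => ?_⟩
  · rcases Fin.two_eq_or_eq_of_ne h.row_ne k with rfl | rfl
    · exact hpos
    · linarith [apply_eq_one_sub_of_mem_Simp h.row_ne hxs]
  rw [← Fin.two_apply_eq_iff_of_ne h.col_ne (purePay B x)]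
  refine ⟨fun hx0 => ?_, fun hx0 => hx0 ▸ sub_eq_zero.1 hgap⟩
  have := h.gap_sub_gap hx hxs
  rw [hx0, sub_self, hgap, sub_zero, zero_eq_mul] at this
  exact eq_of_mem_Simp_of_apply_eq h.row_ne hx hxs (sub_eq_zero.1 (this.resolve_right hκ.ne'))

theorem apply_le_of_mem_XReg (h : CrossedPrefs B i i' j j') {xs x : Fin 2 → ℝ} (hxs : xs ∈ Simp 2)
    (heq : purePay B xs 0 = purePay B xs 1) (hx : x ∈ XReg B j') : x i ≤ xs i := by
  rw [← Fin.two_apply_eq_iff_of_ne h.col_ne (purePay B xs)] at heq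
  have := h.gap_sub_gap hx.1 hxs
  have hx' : purePay B x j ≤ purePay B x j' := hx.2 j
  nlinarith [h.lt_left, h.lt_right]

theorem injective_transpose (h : CrossedPrefs B i i' j j') : Function.Injective Bᵀ :=
  injective_transpose_of_apply_ne (r := i)
    fun h0 => h.lt_left.ne' ((Fin.two_apply_eq_iff_of_ne h.col_ne (B i)).2 h0)

end CrossedPrefs

section Dominance

variable {A B : Matrix (Fin 2) (Fin 2) ℝ} {i i' j j' : Fin 2}

theorem mulVec_apply_lt_of_mem_Simp {y : Fin 2 → ℝ} (hy : y ∈ Simp 2)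
    (hA : ∀ l, A i' l < A i l) : (A *ᵥ y) i' < (A *ᵥ y) i := by
  simpa only [mulVec, dotProduct_comm _ y] using dotProduct_lt_dotProduct_of_mem_stdSimplex hy hA

theorem purePay_lt_of_pos {x : Fin 2 → ℝ} {l : Fin 2} (hi : i ≠ i') (hx : x ∈ Simp 2)
    (hx' : 0 < x i') (hA : A i' l < A i l) : purePay A x l < A i l := by
  have := dotProduct_sub_dotProduct_of_mem_Simp hi hx (single_mem_stdSimplex ℝ i) fun k => A k l
  rw [single_one_dotProduct, Pi.single_eq_same] at this
  change purePay A x l - A i l = _ at this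
  nlinarith [apply_eq_one_sub_of_mem_Simp hi hx, mul_pos hx' (sub_pos.2 hA)]

theorem isNE_iff_of_dominates (hi : i ≠ i') (hj : j ≠ j') (hA : ∀ l, A i' l < A i l)
    (hB : B i j' < B i j) {x y : Fin 2 → ℝ} :
    isNE A B x y ↔ x = Pi.single i 1 ∧ y = Pi.single j 1 := by
  constructor
  · rintro ⟨hx, hy, hI, hII⟩
    have hxi : x = Pi.single i 1 := by
      refine eq_single_of_le_dotProduct hi hx (mulVec_apply_lt_of_mem_Simp hy hA) ?_
      simpa only [pay, single_one_dotProduct] using hI _ (single_mem_stdSimplex ℝ i)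
    subst hxi
    refine ⟨rfl, eq_single_of_le_dotProduct hj hy (v := B i) hB ?_⟩
    have := hII _ (single_mem_stdSimplex ℝ j)
    rwa [pay_single_right, purePay_single, pay, single_one_dotProduct, mulVec,
      dotProduct_comm] at this
  · rintro ⟨rfl, rfl⟩
    refine isNE_single_right (single_mem_stdSimplex ℝ i) (fun k => ?_)
      ((mem_BRII_iff_of_ne hj).2 ?_)
    · rw [purePay_single]
      rcases Fin.two_eq_or_eq_of_ne hi k with rfl | rfl
      · exact le_rfl
      · exact (hA j).le
    · rw [purePay_single, purePay_single]
      exact hB.le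

theorem NEY_eq_of_dominates (hi : i ≠ i') (hj : j ≠ j') (hA : ∀ l, A i' l < A i l)
    (hB : B i j' < B i j) : NEY A B = {Pi.single j 1} := by
  ext y
  constructor
  · rintro ⟨x, hNE⟩
    exact ((isNE_iff_of_dominates hi hj hA hB).1 hNE).2
  · rintro rfl
    exact ⟨_, (isNE_iff_of_dominates hi hj hA hB).2 ⟨rfl, rfl⟩⟩

/-- In the game led by player II, player I's best reply is always the dominant row `i`. -/
theorem XLset_transpose_eq_of_dominates (hi : i ≠ i') (hj : j ≠ j') (hA : ∀ l, A i' l < A i l)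
    (hB : B i j' < B i j) : XLset Bᵀ Aᵀ = {Pi.single j 1} := by
  have hAinj : Function.Injective Aᵀᵀ := injective_transpose_of_apply_ne (r := j)
    fun h => (hA j).ne ((Fin.two_apply_eq_iff_of_ne hi.symm fun k => A k j).2 h)
  have hBR : ∀ y ∈ Simp 2, ∀ l, l ∈ BRII Aᵀ y ↔ l = i := by
    intro y hy l
    have hlt := mulVec_apply_lt_of_mem_Simp hy hA
    rw [← purePay_transpose, ← purePay_transpose] at hlt
    refine ⟨fun hl => ?_, fun hl => hl ▸ (mem_BRII_iff_of_ne hi).2 hlt.le⟩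
    rcases Fin.two_eq_or_eq_of_ne hi l with rfl | rfl
    · rfl
    · exact absurd (hl i) hlt.not_ge
  have hiD : i ∈ Dset Aᵀ := by
    have hu : (fun _ => 1 / 2 : Fin 2 → ℝ) ∈ Simp 2 :=
      ⟨fun _ => by norm_num, by norm_num [Fin.sum_univ_two]⟩
    exact ⟨_, ⟨hu, (hBR _ hu i).2 rfl⟩, fun _ => by norm_num⟩
  have hej : Pi.single j 1 ∈ XReg Aᵀ i :=
    ⟨single_mem_stdSimplex ℝ j, (hBR _ (single_mem_stdSimplex ℝ j) i).2 rfl⟩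
  have hrow : ∀ y ∈ Simp 2, purePay Bᵀ y i = y ⬝ᵥ B i := fun y _ => by
    rw [purePay_transpose, mulVec, dotProduct_comm]
  have halpha : alphaL Bᵀ Aᵀ = B i j := by
    rw [alphaL_eq hAinj hiD hej, purePay_single, transpose_apply]
    rintro l hl z hz
    rw [(hBR z hz.1 l).1 hz.2, hrow z hz.1, purePay_single, transpose_apply]
    refine dotProduct_le_of_mem_stdSimplex hz.1 fun l => ?_
    rcases Fin.two_eq_or_eq_of_ne hj l with rfl | rfl
    · exact le_rfl
    · exact hB.le
  ext y
  constructor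
  · rintro ⟨l, -, hy, hopt⟩
    rw [(hBR y hy.1 l).1 hy.2, minE_eq_purePay hAinj, halpha, hrow y hy.1] at hopt
    exact eq_single_of_le_dotProduct hj hy.1 hB hopt.ge
  · rintro rfl
    exact ⟨i, hiD, hej, by rw [minE_eq_purePay hAinj, halpha, purePay_single, transpose_apply]⟩

end Dominance

namespace CrossedPrefs

variable {A B : Matrix (Fin 2) (Fin 2) ℝ} {i i' j j' : Fin 2} {xs : Fin 2 → ℝ}

theorem exists_XLset_not_mem_NEX_iff (h : CrossedPrefs B i i' j j') (hA : ∀ l, A i' l < A i l)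
    (hxs : xs ∈ Simp 2) (hpos : ∀ k, 0 < xs k)
    (hxs_eq : ∀ x ∈ Simp 2, purePay B x 0 = purePay B x 1 ↔ x = xs) :
    (∃ x ∈ XLset A B, x ∉ NEX A B) ↔ A i j ≤ purePay A xs j' := by
  have hB := h.injective_transpose
  have hxsBR := mem_BRII_of_equalizer ((hxs_eq xs hxs).2 rfl)
  have hD : ∀ l, l ∈ Dset B := fun l => ⟨xs, ⟨hxs, hxsBR l⟩, hpos⟩
  have hei : Pi.single i 1 ∈ XReg B j := ⟨single_mem_stdSimplex ℝ i,
    (mem_BRII_iff_of_ne h.col_ne).2 (by rw [purePay_single, purePay_single]; exact h.lt_left.le)⟩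
  have hcol : ∀ k l, A k l ≤ A i l := fun k l => by
    rcases Fin.two_eq_or_eq_of_ne h.row_ne k with rfl | rfl
    · exact le_rfl
    · exact (hA l).le
  constructor
  · rintro ⟨x, hx, hN⟩
    have heq := equalizer_of_mem_XLset_of_not_mem_NEX hB hx hN
    obtain ⟨l, -, hxl, hopt⟩ := hx
    obtain rfl : x = xs := (hxs_eq x hxl.1).1 heq
    rw [minE_eq_purePay hB] at hopt
    have hle : A i j ≤ purePay A x l := by
      rw [hopt, ← purePay_single A i j]
      exact purePay_le_alphaL hB (hD j) hei
    rcases Fin.two_eq_or_eq_of_ne h.col_ne l with rfl | rfl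
    · exact absurd hle (purePay_lt_of_pos h.row_ne hxs (hpos i') (hA l)).not_ge
    · exact hle
  · intro hle
    have halpha : alphaL A B = purePay A xs j' := by
      refine alphaL_eq hB (hD j') ⟨hxs, hxsBR j'⟩ fun l _ z hz => ?_
      rcases Fin.two_eq_or_eq_of_ne h.col_ne l with rfl | rfl
      · exact (dotProduct_le_of_mem_stdSimplex hz.1 fun k => hcol k l).trans hle
      · have hzi := h.apply_le_of_mem_XReg hxs ((hxs_eq xs hxs).2 rfl) hz
        have := dotProduct_sub_dotProduct_of_mem_Simp h.row_ne hz.1 hxs fun k => A k l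
        change purePay A z l - purePay A xs l = _ at this
        nlinarith [hA l]
    refine ⟨xs, ⟨j', hD j', ⟨hxs, hxsBR j'⟩, by rw [minE_eq_purePay hB, halpha]⟩,
      fun ⟨y, hNE⟩ => ?_⟩
    have := congrFun ((isNE_iff_of_dominates h.row_ne h.col_ne hA h.lt_left).1 hNE).1 i'
    rw [Pi.single_eq_of_ne h.row_ne.symm] at this
    exact (hpos i').ne' this

theorem hasEqualizerAboveNE_iff (h : CrossedPrefs B i i' j j') (hA : ∀ l, A i' l < A i l)
    (hxs : xs ∈ Simp 2) (hpos : ∀ k, 0 < xs k)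
    (hxs_eq : ∀ x ∈ Simp 2, purePay B x 0 = purePay B x 1 ↔ x = xs) :
    HasEqualizerAboveNE A B ↔ A i j ≤ purePay A xs j' := by
  constructor
  · rintro ⟨xd, hxd, heq, hall⟩
    obtain rfl := (hxs_eq xd hxd).1 heq
    obtain ⟨l, hl⟩ := hall _ _
      ((isNE_iff_of_dominates h.row_ne h.col_ne hA h.lt_left).2 ⟨rfl, rfl⟩)
    rw [pay_single_right, purePay_single] at hl
    rcases Fin.two_eq_or_eq_of_ne h.col_ne l with rfl | rfl
    · exact absurd hl (purePay_lt_of_pos h.row_ne hxd (hpos i') (hA l)).not_ge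
    · exact hl
  · intro hle
    refine ⟨xs, hxs, (hxs_eq xs hxs).2 rfl, fun xN yN hN => ⟨j', ?_⟩⟩
    obtain ⟨rfl, rfl⟩ := (isNE_iff_of_dominates h.row_ne h.col_ne hA h.lt_left).1 hN
    rwa [pay_single_right, purePay_single]

theorem iff_and_XLset_transpose_eq_NEY (h : CrossedPrefs B i i' j j') (hA : ∀ l, A i' l < A i l) :
    ((∃ x ∈ XLset A B, x ∉ NEX A B) ↔ HasEqualizerAboveNE A B) ∧ XLset Bᵀ Aᵀ = NEY A B := by
  obtain ⟨xs, hxs, hpos, hxs_eq⟩ := h.exists_equalizer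
  exact ⟨(h.exists_XLset_not_mem_NEX_iff hA hxs hpos hxs_eq).trans
      (h.hasEqualizerAboveNE_iff hA hxs hpos hxs_eq).symm,
    (XLset_transpose_eq_of_dominates h.row_ne h.col_ne hA h.lt_left).trans
      (NEY_eq_of_dominates h.row_ne h.col_ne hA h.lt_left).symm⟩

end CrossedPrefs

/-- in a 2×2 bimatrix game non-degenerate for the leader (player I),
there exists a commitment optimal strategy of player I that is not a Nash equilibrium
strategy if and only if (ℓ1) some pure strategy of player I is strongly dominated and
(ℓ2) player I has an equalizing strategy `x^d` over the follower's payoffs such that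
for every Nash equilibrium `(x^N,y^N)` there is a pure `j` with `α(x^d,e_j) ≥ α^N`.
Moreover, in this case the commitment optimal strategies of player II (as leader in
`Γ^II`, i.e. in the game with matrices `(Bᵀ, Aᵀ)`) coincide with his Nash equilibrium
strategies: `Y^L = NE(Y)`. -/
theorem stmt14 (A B : Matrix (Fin 2) (Fin 2) ℝ) (hnd : NondegFor B) :
    ((∃ xL ∈ XLset A B, xL ∉ NEX A B) ↔
      ((∃ i : Fin 2, ∃ x' ∈ Simp 2,
          ∀ j : Fin 2, purePay A (Pi.single i (1 : ℝ)) j < purePay A x' j) ∧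
       (∃ xd ∈ Simp 2, purePay B xd 0 = purePay B xd 1 ∧
          ∀ (xN yN : Fin 2 → ℝ), isNE A B xN yN →
            ∃ j : Fin 2, pay A xN yN ≤ purePay A xd j))) ∧
    ((∃ xL ∈ XLset A B, xL ∉ NEX A B) → XLset Bᵀ Aᵀ = NEY A B) := by
  by_cases hcase : HasStrictlyDominatedRow A ∧ ∃ x ∈ Simp 2, purePay B x 0 = purePay B x 1
  · obtain ⟨hl1, heq⟩ := hcase
    obtain ⟨i, i', hi, hA⟩ := hl1.exists_lt
    obtain ⟨j, j', h⟩ := exists_crossedPrefs hnd.apply_ne hi heq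
    obtain ⟨hiff, hYL⟩ := h.iff_and_XLset_transpose_eq_NEY hA
    exact ⟨⟨fun hL => ⟨hl1, hiff.1 hL⟩, fun hr => hiff.2 hr.2⟩, fun _ => hYL⟩
  · have hB : Function.Injective Bᵀ := injective_transpose_of_apply_ne (hnd.apply_ne 0)
    have hL : ¬ ∃ xL ∈ XLset A B, xL ∉ NEX A B :=
      fun ⟨x, hx, hN⟩ => hN (XLset_subset_NEX hB hcase hx)
    exact ⟨iff_of_false hL fun ⟨hl1, xd, hxd, heq, _⟩ => hcase ⟨hl1, xd, hxd, heq⟩,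
      fun h => (hL h).elim⟩
end
end
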